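/- arXiv:1808.05214 — 4 statements merged into one kernel-verified Lean document; each statement's English description precedes it below -/
import Mathlib

section
/- Let X, X′, Y, Y′ be random elements of a real separable Hilbert space H and let ε, δ be random variables taking the values 0 and 1 each with probability 1/2, all six objects mutually independent, with X′ distributed as X and Y′ distributed as Y. Define the real random variable S = δ‖X−Y‖ − (1−δ)(ε‖X−X′‖ + (1−ε)‖Y−Y′‖). If X and Y are identically distributed, then the distribution of S is symmetric around the origin, i.e. S and −S are identically distributed. -/
open MeasureTheory ProbabilityTheory
open scoped ENNReal

section Aux

variable {α β γ : Type*} [MeasurableSpace α] [MeasurableSpace β] [MeasurableSpace γ]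

lemma aux_prod_smul_right (μ : Measure α) [SFinite μ] (c : ℝ≥0∞) (ν : Measure β) [SFinite ν] :
    μ.prod (c • ν) = c • (μ.prod ν) := by
  ext s hs
  simp only [Measure.smul_apply, Measure.prod_apply hs, smul_eq_mul]
  rw [← lintegral_const_mul c (measurable_measure_prodMk_left hs)]

lemma aux_prod_map_right (μ : Measure α) [SFinite μ] (ν : Measure β) [SFinite ν]
    {g : β → γ} (hg : Measurable g) :
    μ.prod (ν.map g) = (μ.prod ν).map (Prod.map id g) := by
  calc μ.prod (ν.map g) = (μ.map id).prod (ν.map g) := by rw [Measure.map_id]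
    _ = (μ.prod ν).map (Prod.map id g) := Measure.map_prod_map _ _ measurable_id hg

lemma aux_law01 {Ω : Type*} [MeasurableSpace Ω] (μ : Measure Ω) (ε : Ω → ℝ) (hε : Measurable ε)
    (hval : ∀ ω, ε ω = 0 ∨ ε ω = 1) (h0 : μ {ω | ε ω = 0} = 1/2) (h1 : μ {ω | ε ω = 1} = 1/2) :
    μ.map ε = (1/2 : ℝ≥0∞) • Measure.dirac (0:ℝ) + (1/2 : ℝ≥0∞) • Measure.dirac (1:ℝ) := by
  classical
  ext s hs
  rw [Measure.map_apply hε hs]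
  have hdisj : Disjoint {ω | ε ω = 0} {ω | ε ω = 1} := by
    rw [Set.disjoint_left]; intro ω (h : ε ω = 0) (h' : ε ω = 1); norm_num [h] at h'
  have hm1 : MeasurableSet {ω | ε ω = 1} := hε (measurableSet_singleton 1)
  have hsplit : ε ⁻¹' s = (if (0:ℝ) ∈ s then {ω | ε ω = 0} else ∅) ∪
      (if (1:ℝ) ∈ s then {ω | ε ω = 1} else ∅) := by
    ext ω
    rcases hval ω with h | h <;> by_cases h0m : (0:ℝ) ∈ s <;> by_cases h1m : (1:ℝ) ∈ s <;>
      simp [Set.mem_preimage, h, h0m, h1m]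
  rw [hsplit, Measure.add_apply, Measure.smul_apply, Measure.smul_apply,
    Measure.dirac_apply' _ hs, Measure.dirac_apply' _ hs]
  by_cases h0m : (0:ℝ) ∈ s <;> by_cases h1m : (1:ℝ) ∈ s <;>
    simp [h0m, h1m, measure_union hdisj hm1, h0, h1, ENNReal.inv_two_add_inv_two, smul_eq_mul]

lemma aux_prod4_add (ν : Measure α) [SFinite ν] (w w' : Measure γ) [SFinite w] [SFinite w'] :
    ν.prod (ν.prod (ν.prod (ν.prod (w + w')))) =
      ν.prod (ν.prod (ν.prod (ν.prod w))) + ν.prod (ν.prod (ν.prod (ν.prod w'))) := by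
  rw [Measure.prod_add, Measure.prod_add, Measure.prod_add, Measure.prod_add]

lemma aux_prod4_smul (ν : Measure α) [SFinite ν] (a : ℝ≥0∞) (w : Measure γ) [SFinite w] :
    ν.prod (ν.prod (ν.prod (ν.prod (a • w)))) = a • ν.prod (ν.prod (ν.prod (ν.prod w))) := by
  rw [aux_prod_smul_right, aux_prod_smul_right, aux_prod_smul_right, aux_prod_smul_right]

end Aux

/-- The function giving `S` from the 6-tuple. -/
def auxF {H : Type*} [NormedAddCommGroup H] : H × H × H × H × ℝ × ℝ → ℝ := fun q =>
  q.2.2.2.2.2 * ‖q.1 - q.2.2.1‖ - (1 - q.2.2.2.2.2) *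
    (q.2.2.2.2.1 * ‖q.1 - q.2.1‖ + (1 - q.2.2.2.2.1) * ‖q.2.2.1 - q.2.2.2.1‖)

lemma auxF_measurable {H : Type*} [NormedAddCommGroup H] [MeasurableSpace H] [BorelSpace H]
    [SecondCountableTopology H] : Measurable (auxF (H := H)) := by
  unfold auxF; fun_prop

/-- Theorem 1 of the paper, forward direction: if `X` and `Y` are identically distributed then `S = δ‖X−Y‖ − (1−δ)(ε‖X−X′‖ + (1−ε)‖Y−Y′‖)` is symmetrically distributed around the origin. Mutual independence of the six random objects is expressed by saying that the law of the 6-tuple is the product of the individual laws. -/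
theorem identically_distributed_implies_S_symmetric
    {Ω : Type*} [MeasurableSpace Ω] (μ : Measure Ω) [IsProbabilityMeasure μ]
    {H : Type*} [NormedAddCommGroup H] [InnerProductSpace ℝ H] [CompleteSpace H]
    [SecondCountableTopology H] [MeasurableSpace H] [BorelSpace H]
    (X X' Y Y' : Ω → H) (ε δ : Ω → ℝ)
    (hX : Measurable X) (hX' : Measurable X') (hY : Measurable Y) (hY' : Measurable Y')
    (hε : Measurable ε) (hδ : Measurable δ)
    (hεval : ∀ ω, ε ω = 0 ∨ ε ω = 1) (hδval : ∀ ω, δ ω = 0 ∨ δ ω = 1)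
    (hε0 : μ {ω | ε ω = 0} = 1/2) (hε1 : μ {ω | ε ω = 1} = 1/2)
    (hδ0 : μ {ω | δ ω = 0} = 1/2) (hδ1 : μ {ω | δ ω = 1} = 1/2)
    (hindep : μ.map (fun ω => (X ω, X' ω, Y ω, Y' ω, ε ω, δ ω)) =
      (μ.map X).prod ((μ.map X').prod ((μ.map Y).prod
        ((μ.map Y').prod ((μ.map ε).prod (μ.map δ))))))
    (hX'X : μ.map X' = μ.map X) (hY'Y : μ.map Y' = μ.map Y)
    (S : Ω → ℝ)
    (hS : S = fun ω => δ ω * ‖X ω - Y ω‖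
      - (1 - δ ω) * (ε ω * ‖X ω - X' ω‖ + (1 - ε ω) * ‖Y ω - Y' ω‖))
    (hXY : μ.map X = μ.map Y) :
    μ.map S = μ.map (fun ω => -S ω) := by
  classical
  have hνp : IsProbabilityMeasure (μ.map X) := Measure.isProbabilityMeasure_map hX.aemeasurable
  set ν : Measure H := μ.map X with hν
  set c : ℝ≥0∞ := 1/2 with hc
  set m0 : Measure ℝ := c • Measure.dirac (0:ℝ) + c • Measure.dirac (1:ℝ) with hm0
  have hmeps : μ.map ε = m0 := aux_law01 μ ε hε hεval hε0 hε1
  have hmdel : μ.map δ = m0 := aux_law01 μ δ hδ hδval hδ0 hδ1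
  rw [hX'X, hY'Y, ← hXY, hmeps, hmdel] at hindep
  have hSm : Measurable S := by rw [hS]; fun_prop
  have hfm : Measurable (auxF (H := H)) := auxF_measurable
  have hTm : Measurable (fun ω => (X ω, X' ω, Y ω, Y' ω, ε ω, δ ω)) := by fun_prop
  -- basic marginal computations
  have e2 : Measure.map Prod.snd (ν.prod (ν.prod ν)) = ν.prod ν := by
    rw [Measure.map_snd_prod]; simp
  have e2' : Measure.map Prod.snd (ν.prod (ν.prod (ν.prod ν))) = ν.prod (ν.prod ν) := by
    rw [Measure.map_snd_prod]; simp
  have e1 : Measure.map Prod.fst (ν.prod ν) = ν := by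
    rw [Measure.map_fst_prod]; simp
  have e1' : Measure.map Prod.fst (ν.prod (ν.prod ν)) = ν := by
    rw [Measure.map_fst_prod]; simp
  have hm12 : (ν.prod (ν.prod (ν.prod ν))).map
      (fun q : H × H × H × H => (q.1, q.2.1)) = ν.prod ν := by
    have h : (fun q : H × H × H × H => (q.1, q.2.1))
        = Prod.map id (Prod.fst : H × H × H → H) := rfl
    rw [h, ← aux_prod_map_right ν _ measurable_fst, e1']
  have hm13 : (ν.prod (ν.prod (ν.prod ν))).map
      (fun q : H × H × H × H => (q.1, q.2.2.1)) = ν.prod ν := by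
    have h : (fun q : H × H × H × H => (q.1, q.2.2.1))
        = Prod.map id ((Prod.fst : H × H → H) ∘ (Prod.snd : H × H × H → H × H)) := rfl
    rw [h, ← aux_prod_map_right ν _ (measurable_fst.comp measurable_snd),
      ← Measure.map_map measurable_fst measurable_snd, e2, e1]
  have hm34 : (ν.prod (ν.prod (ν.prod ν))).map
      (fun q : H × H × H × H => (q.2.2.1, q.2.2.2)) = ν.prod ν := by
    have h : (fun q : H × H × H × H => (q.2.2.1, q.2.2.2))
        = (Prod.snd : H × H × H → H × H) ∘ (Prod.snd : H × H × H × H → H × H × H) := rfl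
    rw [h, ← Measure.map_map measurable_snd measurable_snd, e2', e2]
  -- laws of the three distances
  have hnormm : Measurable (fun p : H × H => ‖p.1 - p.2‖) := by fun_prop
  have hnegnormm : Measurable (fun p : H × H => -‖p.1 - p.2‖) := by fun_prop
  have hρ1 : (ν.prod (ν.prod (ν.prod ν))).map (fun q : H × H × H × H => ‖q.1 - q.2.2.1‖)
      = (ν.prod ν).map (fun p : H × H => ‖p.1 - p.2‖) := by
    have h : (fun q : H × H × H × H => ‖q.1 - q.2.2.1‖)
        = (fun p : H × H => ‖p.1 - p.2‖) ∘ (fun q : H × H × H × H => (q.1, q.2.2.1)) := rfl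
    rw [h, ← Measure.map_map hnormm (by fun_prop), hm13]
  have hσ2 : (ν.prod (ν.prod (ν.prod ν))).map (fun q : H × H × H × H => -‖q.1 - q.2.1‖)
      = (ν.prod ν).map (fun p : H × H => -‖p.1 - p.2‖) := by
    have h : (fun q : H × H × H × H => -‖q.1 - q.2.1‖)
        = (fun p : H × H => -‖p.1 - p.2‖) ∘ (fun q : H × H × H × H => (q.1, q.2.1)) := rfl
    rw [h, ← Measure.map_map hnegnormm (by fun_prop), hm12]
  have hσ3 : (ν.prod (ν.prod (ν.prod ν))).map (fun q : H × H × H × H => -‖q.2.2.1 - q.2.2.2‖)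
      = (ν.prod ν).map (fun p : H × H => -‖p.1 - p.2‖) := by
    have h : (fun q : H × H × H × H => -‖q.2.2.1 - q.2.2.2‖)
        = (fun p : H × H => -‖p.1 - p.2‖) ∘ (fun q : H × H × H × H => (q.2.2.1, q.2.2.2)) := rfl
    rw [h, ← Measure.map_map hnegnormm (by fun_prop), hm34]
  -- embedding of dirac factors
  have hembed : ∀ p : ℝ × ℝ, ν.prod (ν.prod (ν.prod (ν.prod (Measure.dirac p)))) =
      (ν.prod (ν.prod (ν.prod ν))).map
        (fun q : H × H × H × H => (q.1, q.2.1, q.2.2.1, q.2.2.2, p.1, p.2)) := by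
    intro p
    rw [Measure.prod_dirac,
      aux_prod_map_right ν ν (show Measurable fun x : H => (x, p) by fun_prop),
      aux_prod_map_right ν (ν.prod ν)
        (show Measurable (Prod.map (id : H → H) fun x : H => (x, p)) by fun_prop),
      aux_prod_map_right ν (ν.prod (ν.prod ν))
        (show Measurable (Prod.map (id : H → H) (Prod.map (id : H → H) fun x : H => (x, p)))
          by fun_prop)]
    rfl
  have Ldirac : ∀ e d : ℝ,
      (ν.prod (ν.prod (ν.prod (ν.prod (Measure.dirac ((e, d) : ℝ × ℝ)))))).map (auxF (H := H))
      = (ν.prod (ν.prod (ν.prod ν))).map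
          (fun q : H × H × H × H => auxF (q.1, q.2.1, q.2.2.1, q.2.2.2, e, d)) := by
    intro e d
    rw [hembed (e, d), Measure.map_map hfm (by fun_prop)]
    rfl
  -- S as pushforward
  have hfT : (auxF (H := H)) ∘ (fun ω => (X ω, X' ω, Y ω, Y' ω, ε ω, δ ω)) = S := by
    rw [hS]; rfl
  have hmapS : μ.map S =
      (ν.prod (ν.prod (ν.prod (ν.prod (m0.prod m0))))).map (auxF (H := H)) := by
    rw [← hindep, Measure.map_map hfm hTm, hfT]
  -- expand m0.prod m0
  have hmm : m0.prod m0 =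
      c • (c • Measure.dirac ((0:ℝ), (0:ℝ))) + c • (c • Measure.dirac ((1:ℝ), (0:ℝ)))
      + (c • (c • Measure.dirac ((0:ℝ), (1:ℝ))) + c • (c • Measure.dirac ((1:ℝ), (1:ℝ)))) := by
    rw [hm0, Measure.prod_add, aux_prod_smul_right, aux_prod_smul_right,
      Measure.prod_dirac, Measure.prod_dirac,
      Measure.map_add _ _ (show Measurable fun x : ℝ => (x, (0:ℝ)) by fun_prop),
      Measure.map_add _ _ (show Measurable fun x : ℝ => (x, (1:ℝ)) by fun_prop),
      Measure.map_smul, Measure.map_smul, Measure.map_smul, Measure.map_smul,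
      Measure.map_dirac' (by fun_prop), Measure.map_dirac' (by fun_prop),
      Measure.map_dirac' (by fun_prop), Measure.map_dirac' (by fun_prop),
      smul_add, smul_add]
  -- the key identity
  set ρ : Measure ℝ := (ν.prod ν).map (fun p : H × H => ‖p.1 - p.2‖) with hρ
  set σ' : Measure ℝ := (ν.prod ν).map (fun p : H × H => -‖p.1 - p.2‖) with hσ
  have hf00 : (fun q : H × H × H × H => auxF (q.1, q.2.1, q.2.2.1, q.2.2.2, (0:ℝ), (0:ℝ)))
      = fun q : H × H × H × H => -‖q.2.2.1 - q.2.2.2‖ := by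
    funext q; simp [auxF]
  have hf10 : (fun q : H × H × H × H => auxF (q.1, q.2.1, q.2.2.1, q.2.2.2, (1:ℝ), (0:ℝ)))
      = fun q : H × H × H × H => -‖q.1 - q.2.1‖ := by
    funext q; simp [auxF]
  have hf01 : (fun q : H × H × H × H => auxF (q.1, q.2.1, q.2.2.1, q.2.2.2, (0:ℝ), (1:ℝ)))
      = fun q : H × H × H × H => ‖q.1 - q.2.2.1‖ := by
    funext q; simp [auxF]
  have hf11 : (fun q : H × H × H × H => auxF (q.1, q.2.1, q.2.2.1, q.2.2.2, (1:ℝ), (1:ℝ)))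
      = fun q : H × H × H × H => ‖q.1 - q.2.2.1‖ := by
    funext q; simp [auxF]
  have key : μ.map S = c • (c • σ') + c • (c • σ') + (c • (c • ρ) + c • (c • ρ)) := by
    rw [hmapS, hmm, aux_prod4_add, aux_prod4_add, aux_prod4_add,
      aux_prod4_smul, aux_prod4_smul, aux_prod4_smul, aux_prod4_smul,
      aux_prod4_smul, aux_prod4_smul, aux_prod4_smul, aux_prod4_smul,
      Measure.map_add _ _ hfm, Measure.map_add _ _ hfm, Measure.map_add _ _ hfm,
      Measure.map_smul, Measure.map_smul, Measure.map_smul, Measure.map_smul,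
      Measure.map_smul, Measure.map_smul, Measure.map_smul, Measure.map_smul,
      Ldirac 0 0, Ldirac 1 0, Ldirac 0 1, Ldirac 1 1, hf00, hf10, hf01, hf11,
      hσ3, hσ2, hρ1]
  -- symmetry
  have hρσ : ρ.map (Neg.neg : ℝ → ℝ) = σ' := by
    rw [hρ, hσ, Measure.map_map measurable_neg hnormm]; rfl
  have hσρ : σ'.map (Neg.neg : ℝ → ℝ) = ρ := by
    rw [hρ, hσ, Measure.map_map measurable_neg hnegnormm]
    congr 1; funext p; simp
  have hnegS : μ.map (fun ω => -S ω) = (μ.map S).map (fun x : ℝ => -x) := by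
    rw [Measure.map_map measurable_neg hSm]; rfl
  rw [hnegS, key, Measure.map_add _ _ measurable_neg, Measure.map_add _ _ measurable_neg,
    Measure.map_add _ _ measurable_neg, Measure.map_smul, Measure.map_smul, Measure.map_smul, Measure.map_smul, hρσ, hσρ]
  abel
end

section
/- Let X, X′, Y, Y′ be random elements of a real separable Hilbert space H and let ε, δ be random variables taking the values 0 and 1 each with probability 1/2, all six objects mutually independent, with X′ distributed as X and Y′ distributed as Y. Define the real random variable S = δ‖X−Y‖ − (1−δ)(ε‖X−X′‖ + (1−ε)‖Y−Y′‖). If the distribution of S is symmetric around the origin (S and −S are identically distributed), then E exp(−‖X−Y‖²/2) = (1/2)·(E exp(−‖X−X′‖²/2) + E exp(−‖Y−Y′‖²/2)). -/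
open MeasureTheory ProbabilityTheory

/-!
Test the symmetry of `S` against `g s = exp (-(max s 0) ^ 2 / 2)`, which is `1` for `s ≤ 0` and
`k s = exp (-s ^ 2 / 2)` for `s ≥ 0`. Given `(ε, δ)`, the variable `S` is `‖X - Y‖ ≥ 0`
(probability 1/2), `-‖X - X'‖ ≤ 0` or `-‖Y - Y'‖ ≤ 0` (probability 1/4 each), and each distance
is independent of `(ε, δ)`. Hence `E g(S) = ½ E k‖X - Y‖ + ½` while
`E g(-S) = ½ + ¼ E k‖X - X'‖ + ¼ E k‖Y - Y'‖`, and `E g(S) = E g(-S)` is the claimed identity.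
-/

noncomputable def clippedGauss (s : ℝ) : ℝ := Real.exp (-(max s 0) ^ 2 / 2)

lemma clippedGauss_of_nonpos {s : ℝ} (hs : s ≤ 0) : clippedGauss s = 1 := by
  simp [clippedGauss, max_eq_right hs]

lemma clippedGauss_of_nonneg {s : ℝ} (hs : 0 ≤ s) : clippedGauss s = Real.exp (-s ^ 2 / 2) := by
  simp [clippedGauss, max_eq_left hs]

@[fun_prop]
lemma continuous_clippedGauss : Continuous clippedGauss := by
  unfold clippedGauss; fun_prop

lemma abs_clippedGauss_le_one (s : ℝ) : |clippedGauss s| ≤ 1 := by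
  rw [clippedGauss, Real.abs_exp, Real.exp_le_one_iff]
  nlinarith [sq_nonneg (max s 0)]

lemma apply_mixture_eq (h : ℝ → ℝ) {d e : ℝ} (hd : d = 0 ∨ d = 1) (he : e = 0 ∨ e = 1)
    (a b c : ℝ) :
    h (d * a - (1 - d) * (e * b + (1 - e) * c)) =
      d * h a + (1 - d) * e * h (-b) + (1 - d) * (1 - e) * h (-c) := by
  rcases hd with rfl | rfl <;> rcases he with rfl | rfl <;> simp

section Probability

variable {Ω α β γ : Type*} [MeasurableSpace Ω] [MeasurableSpace α] [MeasurableSpace β]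
  [MeasurableSpace γ] {μ : Measure Ω}

lemma integral_eq_measureReal_of_zero_or_one {D : Ω → ℝ} (hD : Measurable D)
    (hval : ∀ ω, D ω = 0 ∨ D ω = 1) : ∫ ω, D ω ∂μ = μ.real {ω | D ω = 1} :=
  calc ∫ ω, D ω ∂μ = ∫ ω, {ω | D ω = 1}.indicator 1 ω ∂μ := by
        refine integral_congr_ae (ae_of_all _ fun ω => ?_)
        rcases hval ω with h | h <;> simp [h]
    _ = μ.real {ω | D ω = 1} := integral_indicator_one (hD (measurableSet_singleton 1))

variable [IsProbabilityMeasure μ]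

lemma indepFun_and_map_eq_of_map_prodMk_eq_prod {f : Ω → α} {g : Ω → β} (hf : Measurable f)
    (hg : Measurable g) {ρ : Measure β} [SFinite ρ]
    (hfg : μ.map (fun ω => (f ω, g ω)) = (μ.map f).prod ρ) :
    IndepFun f g μ ∧ μ.map g = ρ := by
  have := Measure.isProbabilityMeasure_map (μ := μ) hf.aemeasurable
  have hg_law : μ.map g = ρ := by
    rw [← Measure.snd_map_prodMk hf, hfg, Measure.snd_prod]
  refine ⟨(indepFun_iff_map_prod_eq_prod_map_map hf.aemeasurable hg.aemeasurable).2 ?_, hg_law⟩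
  rw [hfg, hg_law]

lemma ProbabilityTheory.IndepFun.prodMk_left_of_prodMk_right {f : Ω → α} {g : Ω → β}
    {h : Ω → γ} (hf : Measurable f) (hg : Measurable g) (hh : Measurable h)
    (hfgh : IndepFun f (fun ω => (g ω, h ω)) μ) (hgh : IndepFun g h μ) : IndepFun (fun ω => (f ω, g ω)) h μ := by
  have hfg : IndepFun f g μ := hfgh.comp measurable_id measurable_fst
  rw [indepFun_iff_map_prod_eq_prod_map_map hf.aemeasurable (hg.prodMk hh).aemeasurable]
    at hfgh
  rw [indepFun_iff_map_prod_eq_prod_map_map hg.aemeasurable hh.aemeasurable] at hgh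
  rw [indepFun_iff_map_prod_eq_prod_map_map hf.aemeasurable hg.aemeasurable] at hfg
  rw [indepFun_iff_map_prod_eq_prod_map_map (hf.prodMk hg).aemeasurable hh.aemeasurable, hfg]
  calc μ.map (fun ω => ((f ω, g ω), h ω))
      = (μ.map (fun ω => (f ω, g ω, h ω))).map MeasurableEquiv.prodAssoc.symm := by
        rw [Measure.map_map (by fun_prop) (by fun_prop)]; rfl
    _ = ((μ.map f).prod (μ.map g)).prod (μ.map h) := by
        rw [hfgh, hgh]
        exact ((measurePreserving_prodAssoc _ _ _).symm _).map_eq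

lemma indepFun_pairs_of_map_eq_prod {X X' Y Y' : Ω → α} {ε δ : Ω → β} (hX : Measurable X)
    (hX' : Measurable X') (hY : Measurable Y) (hY' : Measurable Y') (hε : Measurable ε)
    (hδ : Measurable δ)
    (hindep : μ.map (fun ω => (X ω, X' ω, Y ω, Y' ω, ε ω, δ ω)) =
      (μ.map X).prod ((μ.map X').prod ((μ.map Y).prod
        ((μ.map Y').prod ((μ.map ε).prod (μ.map δ)))))) :
    IndepFun (fun ω => (X ω, Y ω)) δ μ ∧
      IndepFun (fun ω => (X ω, X' ω)) (fun ω => (ε ω, δ ω)) μ ∧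
      IndepFun (fun ω => (Y ω, Y' ω)) (fun ω => (ε ω, δ ω)) μ ∧ IndepFun ε δ μ := by
  obtain ⟨hX_rest, h1⟩ := indepFun_and_map_eq_of_map_prodMk_eq_prod hX (by fun_prop) hindep
  obtain ⟨hX'_rest, h2⟩ := indepFun_and_map_eq_of_map_prodMk_eq_prod hX' (by fun_prop) h1
  obtain ⟨hY_rest, h3⟩ := indepFun_and_map_eq_of_map_prodMk_eq_prod hY (by fun_prop) h2
  obtain ⟨hY'_εδ, h4⟩ := indepFun_and_map_eq_of_map_prodMk_eq_prod hY' (by fun_prop) h3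
  obtain ⟨hεδ, -⟩ := indepFun_and_map_eq_of_map_prodMk_eq_prod hε hδ h4
  have hXY_δ : IndepFun (fun ω => (X ω, Y ω)) δ μ :=
    (hX_rest.comp measurable_id (by fun_prop : Measurable fun r : α × α × α × β × β =>
      (r.2.1, r.2.2.2.2))).prodMk_left_of_prodMk_right hX hY hδ
      (hY_rest.comp measurable_id (by fun_prop : Measurable fun r : α × β × β => r.2.2))
  have hXX'_εδ : IndepFun (fun ω => (X ω, X' ω)) (fun ω => (ε ω, δ ω)) μ :=
    (hX_rest.comp measurable_id (by fun_prop : Measurable fun r : α × α × α × β × β =>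
      (r.1, r.2.2.2))).prodMk_left_of_prodMk_right hX hX' (by fun_prop)
      (hX'_rest.comp measurable_id (by fun_prop : Measurable fun r : α × α × β × β => r.2.2))
  have hYY'_εδ : IndepFun (fun ω => (Y ω, Y' ω)) (fun ω => (ε ω, δ ω)) μ :=
    hY_rest.prodMk_left_of_prodMk_right hY hY' (by fun_prop) hY'_εδ
  exact ⟨hXY_δ, hXX'_εδ, hYY'_εδ, hεδ⟩

lemma integral_one_sub_eq_of_zero_or_one {D : Ω → ℝ} (hD : Measurable D)
    (hval : ∀ ω, D ω = 0 ∨ D ω = 1) : ∫ ω, 1 - D ω ∂μ = 1 - μ.real {ω | D ω = 1} := by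
  have hD_int : Integrable D μ :=
    .of_mem_Icc 0 1 hD.aemeasurable (ae_of_all _ fun ω => by rcases hval ω with h | h <;> simp [h])
  rw [integral_sub (integrable_const 1) hD_int, integral_eq_measureReal_of_zero_or_one hD hval]
  simp

section Mixture

variable {A B C ε δ : Ω → ℝ} {h : ℝ → ℝ} {M : ℝ}

lemma integral_comp_mixture_eq_add (hA : Measurable A) (hB : Measurable B) (hC : Measurable C)
    (hε : Measurable ε) (hδ : Measurable δ)
    (hεval : ∀ ω, ε ω = 0 ∨ ε ω = 1) (hδval : ∀ ω, δ ω = 0 ∨ δ ω = 1)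
    (hh : Measurable h) (hM : ∀ x, |h x| ≤ M) :
    ∫ ω, h (δ ω * A ω - (1 - δ ω) * (ε ω * B ω + (1 - ε ω) * C ω)) ∂μ =
      ∫ ω, δ ω * h (A ω) ∂μ + ∫ ω, (1 - δ ω) * ε ω * h (-B ω) ∂μ
        + ∫ ω, (1 - δ ω) * (1 - ε ω) * h (-C ω) ∂μ := by
  have hh_int : ∀ {Z : Ω → ℝ}, Measurable Z → Integrable (fun ω => h (Z ω)) μ := fun hZ =>
    .of_bound (hh.comp hZ).aestronglyMeasurable M (ae_of_all _ fun ω => hM _)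
  have hw : ∀ ω, ‖δ ω‖ ≤ 1 ∧ ‖(1 - δ ω) * ε ω‖ ≤ 1 ∧ ‖(1 - δ ω) * (1 - ε ω)‖ ≤ 1 := fun ω => by
    rcases hδval ω with hd | hd <;> rcases hεval ω with he | he <;> simp [hd, he]
  have hA_int : Integrable (fun ω => δ ω * h (A ω)) μ :=
    (hh_int hA).bdd_mul hδ.aestronglyMeasurable (ae_of_all _ fun ω => (hw ω).1)
  have hB_int : Integrable (fun ω => (1 - δ ω) * ε ω * h (-B ω)) μ :=
    (hh_int hB.neg).bdd_mul (by fun_prop) (ae_of_all _ fun ω => (hw ω).2.1)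
  have hC_int : Integrable (fun ω => (1 - δ ω) * (1 - ε ω) * h (-C ω)) μ :=
    (hh_int hC.neg).bdd_mul (by fun_prop) (ae_of_all _ fun ω => (hw ω).2.2)
  rw [← integral_add hA_int hB_int,
    ← integral_add (hA_int.add hB_int : Integrable (fun ω => _ + _) μ) hC_int]
  exact integral_congr_ae (ae_of_all _ fun ω => apply_mixture_eq h (hδval ω) (hεval ω) _ _ _)

lemma integral_comp_mixture (hA : Measurable A) (hB : Measurable B) (hC : Measurable C)
    (hε : Measurable ε) (hδ : Measurable δ)
    (hεval : ∀ ω, ε ω = 0 ∨ ε ω = 1) (hδval : ∀ ω, δ ω = 0 ∨ δ ω = 1)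
    (hAδ : IndepFun A δ μ) (hBεδ : IndepFun B (fun ω => (ε ω, δ ω)) μ)
    (hCεδ : IndepFun C (fun ω => (ε ω, δ ω)) μ) (hεδ : IndepFun ε δ μ)
    (hh : Measurable h) (hM : ∀ x, |h x| ≤ M) :
    ∫ ω, h (δ ω * A ω - (1 - δ ω) * (ε ω * B ω + (1 - ε ω) * C ω)) ∂μ =
      μ.real {ω | δ ω = 1} * ∫ ω, h (A ω) ∂μ
        + (1 - μ.real {ω | δ ω = 1}) * μ.real {ω | ε ω = 1} * ∫ ω, h (-B ω) ∂μ
        + (1 - μ.real {ω | δ ω = 1}) * (1 - μ.real {ω | ε ω = 1}) * ∫ ω, h (-C ω) ∂μ := by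
  have hδε : ∀ {u v : ℝ → ℝ}, Measurable u → Measurable v →
      ∫ ω, u (δ ω) * v (ε ω) ∂μ = (∫ ω, u (δ ω) ∂μ) * ∫ ω, v (ε ω) ∂μ := fun hu hv =>
    IndepFun.integral_fun_mul_eq_mul_integral (hεδ.comp hv hu).symm
      (hu.comp hδ).aestronglyMeasurable (hv.comp hε).aestronglyMeasurable
  have hfactor : ∀ {Z : Ω → ℝ} {w : ℝ × ℝ → ℝ}, Measurable Z → Measurable w →
      IndepFun Z (fun ω => (ε ω, δ ω)) μ →
      ∫ ω, w (ε ω, δ ω) * h (Z ω) ∂μ = (∫ ω, w (ε ω, δ ω) ∂μ) * ∫ ω, h (Z ω) ∂μ :=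
    fun hZ hw hZεδ => IndepFun.integral_fun_mul_eq_mul_integral (hZεδ.comp hh hw).symm
      (hw.comp (hε.prodMk hδ)).aestronglyMeasurable (hh.comp hZ).aestronglyMeasurable
  have hA_term : ∫ ω, δ ω * h (A ω) ∂μ = μ.real {ω | δ ω = 1} * ∫ ω, h (A ω) ∂μ := by
    rw [← integral_eq_measureReal_of_zero_or_one hδ hδval]
    exact IndepFun.integral_fun_mul_eq_mul_integral (hAδ.comp hh measurable_id).symm
      hδ.aestronglyMeasurable (hh.comp hA).aestronglyMeasurable
  have hB_term : ∫ ω, (1 - δ ω) * ε ω * h (-B ω) ∂μ =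
      (1 - μ.real {ω | δ ω = 1}) * μ.real {ω | ε ω = 1} * ∫ ω, h (-B ω) ∂μ := by
    rw [← integral_one_sub_eq_of_zero_or_one hδ hδval,
      ← integral_eq_measureReal_of_zero_or_one hε hεval]
    exact (hfactor (w := fun p => (1 - p.2) * p.1) hB.neg (by fun_prop)
      (hBεδ.comp measurable_neg measurable_id)).trans
      (congrArg (· * _) (hδε (u := fun d => 1 - d) (v := id) (by fun_prop) measurable_id))
  have hC_term : ∫ ω, (1 - δ ω) * (1 - ε ω) * h (-C ω) ∂μ =
      (1 - μ.real {ω | δ ω = 1}) * (1 - μ.real {ω | ε ω = 1}) * ∫ ω, h (-C ω) ∂μ := by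
    rw [← integral_one_sub_eq_of_zero_or_one hδ hδval,
      ← integral_one_sub_eq_of_zero_or_one hε hεval]
    exact (hfactor (w := fun p => (1 - p.2) * (1 - p.1)) hC.neg (by fun_prop)
      (hCεδ.comp measurable_neg measurable_id)).trans
      (congrArg (· * _) (hδε (u := fun d => 1 - d) (v := fun e => 1 - e) (by fun_prop)
        (by fun_prop)))
  rw [integral_comp_mixture_eq_add hA hB hC hε hδ hεval hδval hh hM, hA_term, hB_term, hC_term]

end Mixture

end Probability

theorem S_symmetric_implies_gauss_kernel_eq_general
    {Ω : Type*} [MeasurableSpace Ω] (μ : Measure Ω) [IsProbabilityMeasure μ]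
    {H : Type*} [NormedAddCommGroup H]
    [SecondCountableTopology H] [MeasurableSpace H] [BorelSpace H]
    (X X' Y Y' : Ω → H) (ε δ : Ω → ℝ)
    (hX : Measurable X) (hX' : Measurable X') (hY : Measurable Y) (hY' : Measurable Y')
    (hε : Measurable ε) (hδ : Measurable δ)
    (hεval : ∀ ω, ε ω = 0 ∨ ε ω = 1) (hδval : ∀ ω, δ ω = 0 ∨ δ ω = 1)
    (hε1 : μ {ω | ε ω = 1} = 1/2)
    (hδ1 : μ {ω | δ ω = 1} = 1/2)
    (hindep : μ.map (fun ω => (X ω, X' ω, Y ω, Y' ω, ε ω, δ ω)) =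
      (μ.map X).prod ((μ.map X').prod ((μ.map Y).prod
        ((μ.map Y').prod ((μ.map ε).prod (μ.map δ))))))
    (S : Ω → ℝ)
    (hS : S = fun ω => δ ω * ‖X ω - Y ω‖
      - (1 - δ ω) * (ε ω * ‖X ω - X' ω‖ + (1 - ε ω) * ‖Y ω - Y' ω‖))
    (hsym : μ.map S = μ.map (fun ω => -S ω)) :
    ∫ ω, Real.exp (-‖X ω - Y ω‖^2 / 2) ∂μ =
      (1/2) * ((∫ ω, Real.exp (-‖X ω - X' ω‖^2 / 2) ∂μ)
        + ∫ ω, Real.exp (-‖Y ω - Y' ω‖^2 / 2) ∂μ) := by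
  obtain ⟨hXY_δ, hXX'_εδ, hYY'_εδ, hεδ⟩ :=
    indepFun_pairs_of_map_eq_prod hX hX' hY hY' hε hδ hindep
  have hdist : Measurable fun p : H × H => ‖p.1 - p.2‖ := by fun_prop
  have hmix := fun {h : ℝ → ℝ} (hh : Measurable h) (hM : ∀ x, |h x| ≤ 1) =>
    integral_comp_mixture (μ := μ) (A := fun ω => ‖X ω - Y ω‖) (B := fun ω => ‖X ω - X' ω‖)
      (C := fun ω => ‖Y ω - Y' ω‖) (by fun_prop) (by fun_prop) (by fun_prop) hε hδ hεval hδval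
      (hXY_δ.comp hdist measurable_id) (hXX'_εδ.comp hdist measurable_id)
      (hYY'_εδ.comp hdist measurable_id) hεδ hh hM
  have hS_meas : Measurable S := hS ▸ by fun_prop
  have hsym_int : ∫ ω, clippedGauss (S ω) ∂μ = ∫ ω, clippedGauss (-S ω) ∂μ :=
    (IdentDistrib.comp ⟨hS_meas.aemeasurable, hS_meas.neg.aemeasurable, hsym⟩
      continuous_clippedGauss.measurable).integral_eq
  subst hS
  rw [hmix (h := clippedGauss) (by fun_prop) abs_clippedGauss_le_one,
    hmix (h := fun x => clippedGauss (-x)) (by fun_prop) (abs_clippedGauss_le_one <| - ·)]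
    at hsym_int
  simp [clippedGauss_of_nonneg, clippedGauss_of_nonpos, measureReal_def, hδ1, hε1] at hsym_int
  linarith

/-- If `S` is symmetrically distributed around the origin, then `E exp(−‖X−Y‖²/2) = (1/2)·(E exp(−‖X−X′‖²/2) + E exp(−‖Y−Y′‖²/2))`. -/
theorem S_symmetric_implies_gauss_kernel_eq
    {Ω : Type*} [MeasurableSpace Ω] (μ : Measure Ω) [IsProbabilityMeasure μ]
    {H : Type*} [NormedAddCommGroup H] [InnerProductSpace ℝ H] [CompleteSpace H]
    [SecondCountableTopology H] [MeasurableSpace H] [BorelSpace H]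
    (X X' Y Y' : Ω → H) (ε δ : Ω → ℝ)
    (hX : Measurable X) (hX' : Measurable X') (hY : Measurable Y) (hY' : Measurable Y')
    (hε : Measurable ε) (hδ : Measurable δ)
    (hεval : ∀ ω, ε ω = 0 ∨ ε ω = 1) (hδval : ∀ ω, δ ω = 0 ∨ δ ω = 1)
    (hε0 : μ {ω | ε ω = 0} = 1/2) (hε1 : μ {ω | ε ω = 1} = 1/2)
    (hδ0 : μ {ω | δ ω = 0} = 1/2) (hδ1 : μ {ω | δ ω = 1} = 1/2)
    (hindep : μ.map (fun ω => (X ω, X' ω, Y ω, Y' ω, ε ω, δ ω)) =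
      (μ.map X).prod ((μ.map X').prod ((μ.map Y).prod
        ((μ.map Y').prod ((μ.map ε).prod (μ.map δ))))))
    (hX'X : μ.map X' = μ.map X) (hY'Y : μ.map Y' = μ.map Y)
    (S : Ω → ℝ)
    (hS : S = fun ω => δ ω * ‖X ω - Y ω‖
      - (1 - δ ω) * (ε ω * ‖X ω - X' ω‖ + (1 - ε ω) * ‖Y ω - Y' ω‖))
    (hsym : μ.map S = μ.map (fun ω => -S ω)) :
    ∫ ω, Real.exp (-‖X ω - Y ω‖^2 / 2) ∂μ =
      (1/2) * ((∫ ω, Real.exp (-‖X ω - X' ω‖^2 / 2) ∂μ)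
        + ∫ ω, Real.exp (-‖Y ω - Y' ω‖^2 / 2) ∂μ) :=
  S_symmetric_implies_gauss_kernel_eq_general μ X X' Y Y' ε δ hX hX' hY hY' hε hδ hεval hδval hε1
    hδ1 hindep S hS hsym
end

section
/- Let h be a strictly convex continuously differentiable function on [0,1] with h(0) = 0, and let F and G be continuous cumulative distribution functions on the real line. Then ∫_{−∞}^{∞} h(F(x)) dG(x) + ∫_{−∞}^{∞} h(G(x)) dF(x) ≥ 2·∫₀¹ h(u) du, with equality if and only if F(x) = G(x) for all x. -/
open MeasureTheory Filter Topology Set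
open scoped NNReal

/-!
Write `M = (F + G) / 2`. By the probability integral transform, `∫ k ∘ K dK = ∫₀¹ k` for every
continuous c.d.f. `K` and continuous `k`, in particular for `K = F, G, M`. Since
`dM = (dF + dG) / 2`, integrating the midpoint-convexity defect `h ∘ F + h ∘ G - 2 h ∘ M ≥ 0`
against `dM` gives exactly half the left-hand side minus `∫₀¹ h`. The defect is positive where
`F ≠ G`, so in the case of equality `F = G` holds `dF`- and `dG`-almost everywhere; on an interval
`(a, x]` missed by both measures `F` and `G` are constant, so `F = G` everywhere.
-/

theorem Monotone.exists_preimage_Iic_eq_Iic {K : ℝ → ℝ} (hK : Monotone K) (hc : Continuous K)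
    {t : ℝ} (hne : (K ⁻¹' Iic t).Nonempty) (hbdd : BddAbove (K ⁻¹' Iic t)) :
    ∃ s, K s = t ∧ K ⁻¹' Iic t = Iic s := by
  set s := sSup (K ⁻¹' Iic t)
  have hs : K s ≤ t := (isClosed_Iic.preimage hc).csSup_mem hne hbdd
  refine ⟨s, le_antisymm hs ?_, ?_⟩
  · refine _root_.ge_of_tendsto (hc.continuousWithinAt (s := Ioi s) (x := s)) ?_
    filter_upwards [self_mem_nhdsWithin] with x hx
    exact le_of_lt (not_le.1 fun h => (not_le.2 hx) (le_csSup hbdd h))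
  · exact Subset.antisymm (fun x hx => le_csSup hbdd hx) fun x hx => (hK hx).trans hs

theorem ContinuousOn.integrable_comp {X : Type*} [TopologicalSpace X] [MeasurableSpace X]
    [OpensMeasurableSpace X] {μ : Measure X} [IsFiniteMeasure μ] {s : Set ℝ} (hs : IsCompact s)
    {f : ℝ → ℝ} (hf : ContinuousOn f s) {g : X → ℝ} (hg : Continuous g) (hgs : ∀ x, g x ∈ s) :
    Integrable (fun x => f (g x)) μ := by
  obtain ⟨C, hC⟩ := hs.exists_bound_of_continuousOn hf
  exact .of_bound (hf.comp_continuous hg hgs).aestronglyMeasurable C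
    (ae_of_all _ fun x => hC _ (hgs x))

theorem half_smul_add_half_smul_eq (a b : ℝ) :
    (1 / 2 : ℝ) • a + (1 / 2 : ℝ) • b = (a + b) / 2 := by
  simp only [smul_eq_mul]
  ring

noncomputable def midpointGap (h : ℝ → ℝ) (a b : ℝ) : ℝ :=
  h a + h b - 2 * h ((a + b) / 2)

section midpointGap

variable {s : Set ℝ} {h : ℝ → ℝ} {a b : ℝ}

theorem ConvexOn.midpointGap_nonneg (hh : ConvexOn ℝ s h) (ha : a ∈ s) (hb : b ∈ s) :
    0 ≤ midpointGap h a b := by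
  have := hh.2 ha hb (by norm_num : (0 : ℝ) ≤ 1 / 2) (by norm_num : (0 : ℝ) ≤ 1 / 2) (by norm_num)
  rw [half_smul_add_half_smul_eq, smul_eq_mul, smul_eq_mul] at this
  rw [midpointGap]
  linarith

theorem StrictConvexOn.midpointGap_pos (hh : StrictConvexOn ℝ s h) (ha : a ∈ s) (hb : b ∈ s)
    (hab : a ≠ b) : 0 < midpointGap h a b := by
  have := hh.2 ha hb hab (by norm_num : (0 : ℝ) < 1 / 2) (by norm_num : (0 : ℝ) < 1 / 2)
    (by norm_num)
  rw [half_smul_add_half_smul_eq, smul_eq_mul, smul_eq_mul] at this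
  rw [midpointGap]
  linarith

theorem ContinuousOn.integrable_midpointGap {X : Type*} [TopologicalSpace X] [MeasurableSpace X]
    [OpensMeasurableSpace X] {μ : Measure X} [IsFiniteMeasure μ] (hs : IsCompact s)
    (hconv : Convex ℝ s) (hh : ContinuousOn h s) {f g : X → ℝ} (hf : Continuous f)
    (hg : Continuous g) (hfs : ∀ x, f x ∈ s) (hgs : ∀ x, g x ∈ s) :
    Integrable (fun x => midpointGap h (f x) (g x)) μ := by
  have hmid x : (f x + g x) / 2 ∈ s := half_smul_add_half_smul_eq (f x) (g x) ▸
    hconv (hfs x) (hgs x) (by norm_num) (by norm_num) (by norm_num)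
  exact ((hh.integrable_comp hs hf hfs).add (hh.integrable_comp hs hg hgs)).sub
    ((hh.integrable_comp hs (by fun_prop) hmid).const_mul 2)

end midpointGap

namespace StieltjesFunction

variable (K : StieltjesFunction ℝ)

theorem mem_Icc_of_tendsto (hbot : Tendsto K atBot (𝓝 0)) (htop : Tendsto K atTop (𝓝 1))
    (x : ℝ) : K x ∈ Icc (0 : ℝ) 1 :=
  ⟨K.mono.le_of_tendsto hbot x, K.mono.ge_of_tendsto htop x⟩

theorem measure_preimage_Iic (hc : Continuous K) (hbot : Tendsto K atBot (𝓝 0))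
    (htop : Tendsto K atTop (𝓝 1)) (t : ℝ) :
    K.measure (K ⁻¹' Iic t) = ENNReal.ofReal (min 1 t) := by
  rcases le_or_gt 1 t with ht1 | ht1
  · have huniv : K ⁻¹' Iic t = univ :=
      eq_univ_of_forall fun x => (K.mem_Icc_of_tendsto hbot htop x).2.trans ht1
    rw [huniv, K.measure_univ hbot htop, sub_zero, min_eq_left ht1]
  have hbdd : BddAbove (K ⁻¹' Iic t) := by
    obtain ⟨B, hB⟩ := (htop.eventually (eventually_gt_nhds ht1)).exists_forall_of_atTop
    exact ⟨B, fun x hx => le_of_not_ge fun hxB => (hB x hxB).not_ge hx⟩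
  rcases (K ⁻¹' Iic t).eq_empty_or_nonempty with hempty | hne
  · have ht0 : t ≤ 0 := by
      by_contra! ht0
      obtain ⟨x, hx⟩ := (hbot.eventually (eventually_le_nhds ht0)).exists
      exact hempty.subset hx
    rw [hempty, measure_empty, ENNReal.ofReal_of_nonpos (min_le_of_right_le ht0)]
  · obtain ⟨s, hst, heq⟩ := K.mono.exists_preimage_Iic_eq_Iic hc hne hbdd
    rw [heq, K.measure_Iic hbot, sub_zero, hst, min_eq_right ht1.le]

theorem map_measure_eq_volume_restrict (hc : Continuous K) (hbot : Tendsto K atBot (𝓝 0))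
    (htop : Tendsto K atTop (𝓝 1)) :
    K.measure.map K = volume.restrict (Ioc 0 1) := by
  have := K.isProbabilityMeasure hbot htop
  refine Measure.ext_of_Iic _ _ fun t => ?_
  rw [Measure.map_apply hc.measurable measurableSet_Iic, K.measure_preimage_Iic hc hbot htop,
    Measure.restrict_apply measurableSet_Iic, inter_comm, Ioc_inter_Iic, Real.volume_Ioc,
    sub_zero]

theorem integral_comp_eq_intervalIntegral (hc : Continuous K) (hbot : Tendsto K atBot (𝓝 0))
    (htop : Tendsto K atTop (𝓝 1)) {f : ℝ → ℝ} (hf : ContinuousOn f (Icc 0 1)) :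
    ∫ x, f (K x) ∂K.measure = ∫ u in (0 : ℝ)..1, f u := by
  have hmap := K.map_measure_eq_volume_restrict hc hbot htop
  have hf' : AEStronglyMeasurable f (K.measure.map K) := by
    rw [hmap]
    exact (hf.mono Ioc_subset_Icc_self).aestronglyMeasurable measurableSet_Ioc
  rw [← integral_map hc.aemeasurable hf', hmap, intervalIntegral.integral_of_le zero_le_one]

noncomputable def average (F G : StieltjesFunction ℝ) : StieltjesFunction ℝ :=
  (2⁻¹ : ℝ≥0) • (F + G)

variable {F G : StieltjesFunction ℝ}

theorem average_apply (x : ℝ) : average F G x = (F x + G x) / 2 := by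
  change ((2⁻¹ : ℝ≥0) : ℝ) * (F x + G x) = _
  push_cast
  ring

theorem measure_average : (average F G).measure = (2⁻¹ : ℝ≥0) • (F.measure + G.measure) := by
  rw [average, measure_smul, measure_add]

theorem continuous_average (hF : Continuous F) (hG : Continuous G) : Continuous (average F G) := by
  rw [funext average_apply]
  fun_prop

theorem tendsto_average {l : Filter ℝ} {a : ℝ} (hF : Tendsto F l (𝓝 a)) (hG : Tendsto G l (𝓝 a)) :
    Tendsto (average F G) l (𝓝 a) := by
  rw [funext average_apply]
  simpa only [add_self_div_two] using (hF.add hG).div_const 2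

theorem integral_measure_average {f : ℝ → ℝ} (hfF : Integrable f F.measure)
    (hfG : Integrable f G.measure) :
    ∫ x, f x ∂(average F G).measure = ((∫ x, f x ∂F.measure) + ∫ x, f x ∂G.measure) / 2 := by
  rw [measure_average, integral_smul_nnreal_measure, integral_add_measure hfF hfG]
  simp only [NNReal.smul_def, NNReal.coe_inv, NNReal.coe_ofNat, smul_eq_mul]
  ring

theorem ae_measure_average_iff {p : ℝ → Prop} :
    (∀ᵐ x ∂(average F G).measure, p x) ↔ (∀ᵐ x ∂F.measure, p x) ∧ ∀ᵐ x ∂G.measure, p x := by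
  rw [measure_average, Measure.ae_smul_measure_iff (by norm_num), ae_add_measure_iff]

theorem eq_of_ae_eq (hF : Continuous F) (hG : Continuous G) {l : ℝ}
    (hFbot : Tendsto F atBot (𝓝 l)) (hGbot : Tendsto G atBot (𝓝 l))
    (hμF : ∀ᵐ x ∂F.measure, F x = G x) (hμG : ∀ᵐ x ∂G.measure, F x = G x) : F = G := by
  rw [ae_iff] at hμF hμG
  ext x₀
  by_contra hne
  set Z := Iic x₀ ∩ {x | F x = G x}
  rcases Z.eq_empty_or_nonempty with hZ | hZ
  · have hsub : Iic x₀ ⊆ {x | F x ≠ G x} := fun x hx hFG => hZ.subset ⟨hx, hFG⟩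
    have hF0 := measure_mono_null hsub hμF
    have hG0 := measure_mono_null hsub hμG
    rw [F.measure_Iic hFbot, ENNReal.ofReal_eq_zero, sub_nonpos] at hF0
    rw [G.measure_Iic hGbot, ENNReal.ofReal_eq_zero, sub_nonpos] at hG0
    exact hne <| (le_antisymm hF0 (F.mono.le_of_tendsto hFbot x₀)).trans
      (le_antisymm hG0 (G.mono.le_of_tendsto hGbot x₀)).symm
  · have hbdd : BddAbove Z := ⟨x₀, fun x hx => hx.1⟩
    set a := sSup Z
    have ha : a ∈ Z := (isClosed_Iic.inter (isClosed_eq hF hG)).csSup_mem hZ hbdd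
    have hsub : Ioc a x₀ ⊆ {x | F x ≠ G x} :=
      fun x hx hFG => (le_csSup hbdd ⟨hx.2, hFG⟩).not_gt hx.1
    have hF0 := measure_mono_null hsub hμF
    have hG0 := measure_mono_null hsub hμG
    rw [F.measure_Ioc, ENNReal.ofReal_eq_zero, sub_nonpos] at hF0
    rw [G.measure_Ioc, ENNReal.ofReal_eq_zero, sub_nonpos] at hG0
    exact hne <| (le_antisymm hF0 (F.mono ha.1)).trans <|
      ha.2.trans (le_antisymm hG0 (G.mono ha.1)).symm

theorem integral_midpointGap_eq {h : ℝ → ℝ} (hh : ContinuousOn h (Icc 0 1))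
    {F G : StieltjesFunction ℝ} (hFc : Continuous F) (hGc : Continuous G)
    (hFbot : Tendsto F atBot (𝓝 0)) (hFtop : Tendsto F atTop (𝓝 1))
    (hGbot : Tendsto G atBot (𝓝 0)) (hGtop : Tendsto G atTop (𝓝 1)) :
    ∫ x, midpointGap h (F x) (G x) ∂(average F G).measure
      = ((∫ x, h (F x) ∂G.measure) + ∫ x, h (G x) ∂F.measure) / 2 - ∫ u in (0 : ℝ)..1, h u := by
  set M := average F G
  have hMc : Continuous M := continuous_average hFc hGc
  have hMbot : Tendsto M atBot (𝓝 0) := tendsto_average hFbot hGbot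
  have hMtop : Tendsto M atTop (𝓝 1) := tendsto_average hFtop hGtop
  have := F.isProbabilityMeasure hFbot hFtop
  have := G.isProbabilityMeasure hGbot hGtop
  have := M.isProbabilityMeasure hMbot hMtop
  have hint {K : StieltjesFunction ℝ} (hKc : Continuous K) (hKbot : Tendsto K atBot (𝓝 0))
      (hKtop : Tendsto K atTop (𝓝 1)) (μ : Measure ℝ) [IsFiniteMeasure μ] :
      Integrable (fun x => h (K x)) μ :=
    hh.integrable_comp isCompact_Icc hKc (K.mem_Icc_of_tendsto hKbot hKtop)
  have hF := hint hFc hFbot hFtop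
  have hG := hint hGc hGbot hGtop
  have hgap : (fun x => midpointGap h (F x) (G x)) = fun x => h (F x) + h (G x) - 2 * h (M x) := by
    ext x
    rw [midpointGap, average_apply]
  rw [hgap, integral_sub (f := fun x => h (F x) + h (G x)) ((hF _).add (hG _))
      ((hint hMc hMbot hMtop _).const_mul 2),
    integral_add (hF _) (hG _), integral_const_mul, integral_measure_average (hF _) (hF _),
    integral_measure_average (hG _) (hG _), F.integral_comp_eq_intervalIntegral hFc hFbot hFtop hh,
    G.integral_comp_eq_intervalIntegral hGc hGbot hGtop hh,
    M.integral_comp_eq_intervalIntegral hMc hMbot hMtop hh]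
  ring

end StieltjesFunction

open StieltjesFunction in
theorem convex_cdf_inequality_general
    (h : ℝ → ℝ) (hconv : StrictConvexOn ℝ (Set.Icc 0 1) h)
    (hdiff : ContDiffOn ℝ 1 h (Set.Icc 0 1))
    (F G : StieltjesFunction ℝ)
    (hFcont : Continuous F) (hGcont : Continuous G)
    (hFbot : Tendsto F atBot (𝓝 0)) (hFtop : Tendsto F atTop (𝓝 1))
    (hGbot : Tendsto G atBot (𝓝 0)) (hGtop : Tendsto G atTop (𝓝 1)) :
    (∫ x, h (F x) ∂G.measure) + (∫ x, h (G x) ∂F.measure)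
      ≥ 2 * ∫ u in (0:ℝ)..1, h u ∧
    ((∫ x, h (F x) ∂G.measure) + (∫ x, h (G x) ∂F.measure)
      = 2 * ∫ u in (0:ℝ)..1, h u ↔ ∀ x, F x = G x) := by
  have hF01 := F.mem_Icc_of_tendsto hFbot hFtop
  have hG01 := G.mem_Icc_of_tendsto hGbot hGtop
  have := (average F G).isProbabilityMeasure (tendsto_average hFbot hGbot)
    (tendsto_average hFtop hGtop)
  have hgap := integral_midpointGap_eq hdiff.continuousOn hFcont hGcont hFbot hFtop hGbot hGtop
  have hgap_nonneg : 0 ≤ fun x => midpointGap h (F x) (G x) :=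
    fun x => hconv.convexOn.midpointGap_nonneg (hF01 x) (hG01 x)
  have hgap_int := hdiff.continuousOn.integrable_midpointGap (μ := (average F G).measure)
    isCompact_Icc (convex_Icc 0 1) hFcont hGcont hF01 hG01
  refine ⟨by linarith [integral_nonneg (μ := (average F G).measure) hgap_nonneg],
    fun heq x => ?_, fun hFG => ?_⟩
  · have hae := (integral_eq_zero_iff_of_nonneg hgap_nonneg hgap_int).1 (by linarith)
    have hFG : ∀ᵐ x ∂(average F G).measure, F x = G x := by
      filter_upwards [hae] with x hx
      by_contra hne
      exact (hconv.midpointGap_pos (hF01 x) (hG01 x) hne).ne' hx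
    rw [ae_measure_average_iff] at hFG
    rw [eq_of_ae_eq hFcont hGcont hFbot hGbot hFG.1 hFG.2]
  · obtain rfl : F = G := StieltjesFunction.ext hFG
    rw [F.integral_comp_eq_intervalIntegral hFcont hFbot hFtop hdiff.continuousOn]
    ring

/-- The inequality from [KV]: for a strictly convex, continuously differentiable
`h` on `[0,1]` with `h 0 = 0` and continuous c.d.f.s `F, G` on the real line
(modelled as Stieltjes functions tending to `0` at `−∞` and to `1` at `+∞`),
`∫ h(F) dG + ∫ h(G) dF ≥ 2∫₀¹ h(u) du`, with equality iff `F = G`. -/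
theorem convex_cdf_inequality
    (h : ℝ → ℝ) (hconv : StrictConvexOn ℝ (Set.Icc 0 1) h)
    (hdiff : ContDiffOn ℝ 1 h (Set.Icc 0 1)) (h0 : h 0 = 0)
    (F G : StieltjesFunction ℝ)
    (hFcont : Continuous F) (hGcont : Continuous G)
    (hFbot : Tendsto F atBot (𝓝 0)) (hFtop : Tendsto F atTop (𝓝 1))
    (hGbot : Tendsto G atBot (𝓝 0)) (hGtop : Tendsto G atTop (𝓝 1)) :
    (∫ x, h (F x) ∂G.measure) + (∫ x, h (G x) ∂F.measure)
      ≥ 2 * ∫ u in (0:ℝ)..1, h u ∧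
    ((∫ x, h (F x) ∂G.measure) + (∫ x, h (G x) ∂F.measure)
      = 2 * ∫ u in (0:ℝ)..1, h u ↔ ∀ x, F x = G x) :=
  convex_cdf_inequality_general h hconv hdiff F G hFcont hGcont hFbot hFtop hGbot hGtop
end

section
/- Let X, X′, Y, Y′ be random elements of a real separable Hilbert space H and let ε, δ be random variables taking the values 0 and 1 each with probability 1/2, all six objects mutually independent, with X′ distributed as X and Y′ distributed as Y. Define the real random variable S = δ‖X−Y‖ − (1−δ)(ε‖X−X′‖ + (1−ε)‖Y−Y′‖). Then, for arbitrary distributions of X and Y, zero is a median of S; that is, P(S ≥ 0) ≥ 1/2 and P(S ≤ 0) ≥ 1/2. -/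
/-!
On `{δ = 1}` the variable `S` equals `‖X - Y‖ ≥ 0`, and on `{δ = 0}` it equals minus a convex
combination of two norms, so `S ≤ 0`. Each of these events has probability `1/2`.
-/

open MeasureTheory

lemma convex_combination_nonneg {t a b : ℝ} (ht₀ : 0 ≤ t) (ht₁ : t ≤ 1) (ha : 0 ≤ a)
    (hb : 0 ≤ b) : 0 ≤ t * a + (1 - t) * b :=
  add_nonneg (mul_nonneg ht₀ ha) (mul_nonneg (sub_nonneg.2 ht₁) hb)

theorem zero_is_median_of_S_general
    {Ω : Type*} [MeasurableSpace Ω] (μ : Measure Ω)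
    {H : Type*} [NormedAddCommGroup H]
    (X X' Y Y' : Ω → H) (ε δ : Ω → ℝ)
    (hεval : ∀ ω, ε ω = 0 ∨ ε ω = 1)
    (hδ0 : μ {ω | δ ω = 0} = 1/2) (hδ1 : μ {ω | δ ω = 1} = 1/2)
    (S : Ω → ℝ)
    (hS : S = fun ω => δ ω * ‖X ω - Y ω‖
      - (1 - δ ω) * (ε ω * ‖X ω - X' ω‖ + (1 - ε ω) * ‖Y ω - Y' ω‖))
     :
    μ {ω | 0 ≤ S ω} ≥ 1/2 ∧ μ {ω | S ω ≤ 0} ≥ 1/2 := by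
  subst hS
  constructor
  · rw [← hδ1]
    refine measure_mono fun ω (hω : δ ω = 1) => ?_
    simp [hω]
  · rw [← hδ0]
    refine measure_mono fun ω (hω : δ ω = 0) => ?_
    have hε : 0 ≤ ε ω ∧ ε ω ≤ 1 := by rcases hεval ω with h | h <;> norm_num [h]
    simpa [hω] using convex_combination_nonneg hε.1 hε.2 (norm_nonneg (X ω - X' ω))
      (norm_nonneg (Y ω - Y' ω))

/-- For arbitrary distributions of `X` and `Y`, zero is a median of `S`: `P(S ≥ 0) ≥ 1/2` and `P(S ≤ 0) ≥ 1/2`. -/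
theorem zero_is_median_of_S
    {Ω : Type*} [MeasurableSpace Ω] (μ : Measure Ω) [IsProbabilityMeasure μ]
    {H : Type*} [NormedAddCommGroup H] [InnerProductSpace ℝ H] [CompleteSpace H]
    [SecondCountableTopology H] [MeasurableSpace H] [BorelSpace H]
    (X X' Y Y' : Ω → H) (ε δ : Ω → ℝ)
    (hX : Measurable X) (hX' : Measurable X') (hY : Measurable Y) (hY' : Measurable Y')
    (hε : Measurable ε) (hδ : Measurable δ)
    (hεval : ∀ ω, ε ω = 0 ∨ ε ω = 1) (hδval : ∀ ω, δ ω = 0 ∨ δ ω = 1)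
    (hε0 : μ {ω | ε ω = 0} = 1/2) (hε1 : μ {ω | ε ω = 1} = 1/2)
    (hδ0 : μ {ω | δ ω = 0} = 1/2) (hδ1 : μ {ω | δ ω = 1} = 1/2)
    (hindep : μ.map (fun ω => (X ω, X' ω, Y ω, Y' ω, ε ω, δ ω)) =
      (μ.map X).prod ((μ.map X').prod ((μ.map Y).prod
        ((μ.map Y').prod ((μ.map ε).prod (μ.map δ))))))
    (hX'X : μ.map X' = μ.map X) (hY'Y : μ.map Y' = μ.map Y)
    (S : Ω → ℝ)
    (hS : S = fun ω => δ ω * ‖X ω - Y ω‖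
      - (1 - δ ω) * (ε ω * ‖X ω - X' ω‖ + (1 - ε ω) * ‖Y ω - Y' ω‖))
     :
    μ {ω | 0 ≤ S ω} ≥ 1/2 ∧ μ {ω | S ω ≤ 0} ≥ 1/2 :=
  zero_is_median_of_S_general μ X X' Y Y' ε δ hεval hδ0 hδ1 S hS
end
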